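/- arXiv:1711.06649 — 5 statements merged into one kernel-verified Lean document; each statement's English description precedes it below -/
import Mathlib

section
/- Let (A,B,C,f,g) be a three-term complex in 𝒞, i.e. f : A ⟶ B, g : B ⟶ C with f ≫ g = 0. Suppose that the map Hom(A⟦1⟧, B) → Hom(A⟦1⟧, C) given by post-composition with g, u ↦ u ≫ g, is surjective. Then any two convolutions of right Postnikov systems associated to (A,B,C,f,g) are isomorphic: if Z₁ is a convolution of some right Postnikov system associated to the complex and Z₂ is a convolution of some (possibly different) right Postnikov system associated to the complex, then Z₁ ≅ Z₂. -/
/-!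
The cones of `g` are unique up to an isomorphism `e : X₁ ≅ X₂` compatible with the maps to
`B⟦1⟧`, so `j₁ ≫ e.hom` and `j₂` agree after composing with `i₂`. Their difference therefore
factors through `h₂ : C ⟶ X₂`, and by surjectivity through `g ≫ h₂ = 0`; hence
`j₁ ≫ e.hom = j₂`, and the cones of `j₁` and `j₂` are isomorphic.
-/

open CategoryTheory Category Limits Pretriangulated

namespace CategoryTheory.Pretriangulated

variable {𝒞 : Type*} [Category 𝒞] [HasZeroObject 𝒞] [HasShift 𝒞 ℤ] [Preadditive 𝒞]
  [∀ n : ℤ, (CategoryTheory.shiftFunctor 𝒞 n).Additive] [Pretriangulated 𝒞]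

lemma Triangle.eq_of_comp_mor₃_eq_of_surjective {T : Triangle 𝒞} (hT : T ∈ distTriang 𝒞)
    {W : 𝒞} (hsurj : Function.Surjective (fun u : W ⟶ T.obj₁ => u ≫ T.mor₁))
    {a b : W ⟶ T.obj₃} (hab : a ≫ T.mor₃ = b ≫ T.mor₃) : a = b := by
  obtain ⟨c, hc⟩ := Triangle.coyoneda_exact₃ _ hT (a - b)
    (by rw [Preadditive.sub_comp, hab, sub_self])
  obtain ⟨u, rfl⟩ := hsurj c
  rw [← sub_eq_zero, hc, assoc, comp_distTriang_mor_zero₁₂ _ hT, comp_zero]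

lemma exists_iso_of_distTriang_same_mor₁ {B C X₁ X₂ : 𝒞} (g : B ⟶ C)
    (h₁ : C ⟶ X₁) (i₁ : X₁ ⟶ B⟦(1 : ℤ)⟧) (hT₁ : Triangle.mk g h₁ i₁ ∈ distTriang 𝒞)
    (h₂ : C ⟶ X₂) (i₂ : X₂ ⟶ B⟦(1 : ℤ)⟧) (hT₂ : Triangle.mk g h₂ i₂ ∈ distTriang 𝒞) :
    ∃ e : X₁ ≅ X₂, e.hom ≫ i₂ = i₁ := by
  let eT := isoTriangleOfIso₁₂ _ _ hT₁ hT₂ (Iso.refl B) (Iso.refl C)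
    ((comp_id g).trans (id_comp g).symm)
  refine ⟨Triangle.π₃.mapIso eT, ?_⟩
  have h : i₁ ≫ (𝟙 B)⟦(1 : ℤ)⟧' = eT.hom.hom₃ ≫ i₂ := eT.hom.comm₃
  rw [Functor.map_id, comp_id] at h
  exact h.symm

end CategoryTheory.Pretriangulated

/-- If `Hom(A⟦1⟧, B) → Hom(A⟦1⟧, C)`, `u ↦ u ≫ g`, is surjective, then any
two convolutions of right Postnikov systems associated to the three-term complex
`A ⟶f B ⟶g C` are isomorphic. -/
theorem right_postnikov_convolutions_iso_of_postcomp_surjective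
    {𝒞 : Type*} [Category 𝒞] [HasZeroObject 𝒞] [HasShift 𝒞 ℤ] [Preadditive 𝒞]
    [∀ n : ℤ, (CategoryTheory.shiftFunctor 𝒞 n).Additive] [Pretriangulated 𝒞]
    {A B C : 𝒞} (f : A ⟶ B) (g : B ⟶ C) (hfg : f ≫ g = 0)
    (hsurj : Function.Surjective (fun u : A⟦(1 : ℤ)⟧ ⟶ B => u ≫ g))
    {X₁ X₂ Z₁ Z₂ : 𝒞}
    (h₁ : C ⟶ X₁) (i₁ : X₁ ⟶ B⟦(1 : ℤ)⟧) (hT₁ : Triangle.mk g h₁ i₁ ∈ distTriang 𝒞)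
    (j₁ : A⟦(1 : ℤ)⟧ ⟶ X₁) (hj₁ : j₁ ≫ i₁ = f⟦(1 : ℤ)⟧')
    (p₁ : X₁ ⟶ Z₁) (q₁ : Z₁ ⟶ A⟦(1 : ℤ)⟧⟦(1 : ℤ)⟧)
    (hZ₁ : Triangle.mk j₁ p₁ q₁ ∈ distTriang 𝒞)
    (h₂ : C ⟶ X₂) (i₂ : X₂ ⟶ B⟦(1 : ℤ)⟧) (hT₂ : Triangle.mk g h₂ i₂ ∈ distTriang 𝒞)
    (j₂ : A⟦(1 : ℤ)⟧ ⟶ X₂) (hj₂ : j₂ ≫ i₂ = f⟦(1 : ℤ)⟧')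
    (p₂ : X₂ ⟶ Z₂) (q₂ : Z₂ ⟶ A⟦(1 : ℤ)⟧⟦(1 : ℤ)⟧)
    (hZ₂ : Triangle.mk j₂ p₂ q₂ ∈ distTriang 𝒞) :
    Nonempty (Z₁ ≅ Z₂) := by
  obtain ⟨e, he⟩ := exists_iso_of_distTriang_same_mor₁ g h₁ i₁ hT₁ h₂ i₂ hT₂
  have hj : j₁ ≫ e.hom = j₂ :=
    Triangle.eq_of_comp_mor₃_eq_of_surjective hT₂ hsurj
      (show (j₁ ≫ e.hom) ≫ i₂ = j₂ ≫ i₂ by rw [assoc, he, hj₁, hj₂])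
  exact ⟨Triangle.π₃.mapIso
    (isoTriangleOfIso₁₂ _ _ hZ₁ hZ₂ (Iso.refl _) e (hj.trans (id_comp j₂).symm))⟩
end

section
/- Let (A,B,C,f,g) be a three-term complex in 𝒞, i.e. f : A ⟶ B, g : B ⟶ C with f ≫ g = 0. Suppose that the map Hom(B⟦1⟧, C) → Hom(A⟦1⟧, C) given by pre-composition with f⟦1⟧, v ↦ f⟦1⟧ ≫ v, is surjective. Then any two convolutions of left Postnikov systems associated to (A,B,C,f,g) are isomorphic: if Z₁ is a convolution of some left Postnikov system associated to the complex and Z₂ is a convolution of some (possibly different) left Postnikov system associated to the complex, then Z₁ ≅ Z₂. -/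
open CategoryTheory Category Limits Pretriangulated

/-! The cones `Y₁`, `Y₂` of `f` are related by an isomorphism `e` with `k₁ ≫ e = k₂`.
Then `m₁ - e ≫ m₂` vanishes on `k₁`, so it factors as `l₁ ≫ w`; surjectivity writes
`w = f⟦1⟧' ≫ v`, and `l₁ ≫ f⟦1⟧' = 0` forces `m₁ = e ≫ m₂`. Hence `(e, 𝟙 C)` extends to an
isomorphism of the triangles defining `Z₁` and `Z₂`. -/

namespace CategoryTheory.Pretriangulated

variable {𝒞 : Type*} [Category 𝒞] [Preadditive 𝒞] [HasZeroObject 𝒞] [HasShift 𝒞 ℤ]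
  [∀ n : ℤ, (shiftFunctor 𝒞 n).Additive] [Pretriangulated 𝒞]

lemma exists_iso_obj₃_of_distTriang_mk {A B Y₁ Y₂ : 𝒞} {f : A ⟶ B}
    {k₁ : B ⟶ Y₁} {l₁ : Y₁ ⟶ A⟦(1 : ℤ)⟧} {k₂ : B ⟶ Y₂} {l₂ : Y₂ ⟶ A⟦(1 : ℤ)⟧}
    (hT₁ : Triangle.mk f k₁ l₁ ∈ distTriang 𝒞) (hT₂ : Triangle.mk f k₂ l₂ ∈ distTriang 𝒞) :
    ∃ e : Y₁ ≅ Y₂, k₁ ≫ e.hom = k₂ := by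
  obtain ⟨e, -, he₂⟩ := exists_iso_of_arrow_iso _ _ hT₁ hT₂ (Iso.refl (Arrow.mk f))
  refine ⟨Triangle.π₃.mapIso e, ?_⟩
  exact e.hom.comm₂.trans (by rw [he₂]; exact id_comp k₂)

lemma eq_zero_of_mor₂_comp_eq_zero {T : Triangle 𝒞} (hT : T ∈ distTriang 𝒞) {C : 𝒞}
    (hsurj : Function.Surjective (fun v : T.obj₂⟦(1 : ℤ)⟧ ⟶ C => T.mor₁⟦(1 : ℤ)⟧' ≫ v))
    {u : T.obj₃ ⟶ C} (hu : T.mor₂ ≫ u = 0) : u = 0 := by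
  obtain ⟨w, rfl⟩ := Triangle.yoneda_exact₃ T hT u hu
  obtain ⟨v, rfl⟩ := hsurj w
  simp [comp_distTriang_mor_zero₃₁_assoc _ hT]

end CategoryTheory.Pretriangulated

/-- If `Hom(B⟦1⟧, C) → Hom(A⟦1⟧, C)`, `v ↦ f⟦1⟧ ≫ v`, is surjective, then
any two convolutions of left Postnikov systems associated to the three-term complex
`A ⟶f B ⟶g C` are isomorphic. -/
theorem left_postnikov_convolutions_iso_of_precomp_surjective
    {𝒞 : Type*} [Category 𝒞] [HasZeroObject 𝒞] [HasShift 𝒞 ℤ] [Preadditive 𝒞]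
    [∀ n : ℤ, (CategoryTheory.shiftFunctor 𝒞 n).Additive] [Pretriangulated 𝒞]
    {A B C : 𝒞} (f : A ⟶ B) (g : B ⟶ C) (hfg : f ≫ g = 0)
    (hsurj : Function.Surjective (fun v : B⟦(1 : ℤ)⟧ ⟶ C => f⟦(1 : ℤ)⟧' ≫ v))
    {Y₁ Y₂ Z₁ Z₂ : 𝒞}
    (k₁ : B ⟶ Y₁) (l₁ : Y₁ ⟶ A⟦(1 : ℤ)⟧) (hT₁ : Triangle.mk f k₁ l₁ ∈ distTriang 𝒞)
    (m₁ : Y₁ ⟶ C) (hm₁ : k₁ ≫ m₁ = g)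
    (p₁ : C ⟶ Z₁) (q₁ : Z₁ ⟶ Y₁⟦(1 : ℤ)⟧)
    (hZ₁ : Triangle.mk m₁ p₁ q₁ ∈ distTriang 𝒞)
    (k₂ : B ⟶ Y₂) (l₂ : Y₂ ⟶ A⟦(1 : ℤ)⟧) (hT₂ : Triangle.mk f k₂ l₂ ∈ distTriang 𝒞)
    (m₂ : Y₂ ⟶ C) (hm₂ : k₂ ≫ m₂ = g)
    (p₂ : C ⟶ Z₂) (q₂ : Z₂ ⟶ Y₂⟦(1 : ℤ)⟧)
    (hZ₂ : Triangle.mk m₂ p₂ q₂ ∈ distTriang 𝒞) :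
    Nonempty (Z₁ ≅ Z₂) := by
  obtain ⟨e, he⟩ := exists_iso_obj₃_of_distTriang_mk hT₁ hT₂
  have hm : m₁ = e.hom ≫ m₂ := by
    rw [← sub_eq_zero]
    refine eq_zero_of_mor₂_comp_eq_zero hT₁ hsurj ?_
    change k₁ ≫ (m₁ - e.hom ≫ m₂) = 0
    rw [Preadditive.comp_sub, reassoc_of% he, hm₁, hm₂, sub_self]
  exact ⟨Triangle.π₃.mapIso (isoTriangleOfIso₁₂ _ _ hZ₁ hZ₂ e (Iso.refl C)
    ((comp_id m₁).trans hm))⟩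
end

section
/- Let (A,B,C,f,g) be a three-term complex in 𝒞, i.e. f : A ⟶ B, g : B ⟶ C with f ≫ g = 0. Suppose that Hom(A⟦1⟧, C) = 0, i.e. every morphism A⟦1⟧ ⟶ C is zero. Then any two convolutions of the complex are isomorphic: if each of Z₁ and Z₂ is a convolution of some right Postnikov system or of some left Postnikov system associated to (A,B,C,f,g), then Z₁ ≅ Z₂. -/
open CategoryTheory Category Limits Pretriangulated

variable {𝒞 : Type*} [Category 𝒞] [HasZeroObject 𝒞] [HasShift 𝒞 ℤ] [Preadditive 𝒞]
  [∀ n : ℤ, (CategoryTheory.shiftFunctor 𝒞 n).Additive] [Pretriangulated 𝒞]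

/-- `Z` is a convolution of some right Postnikov system associated to the three-term
complex `A ⟶f B ⟶g C`: there are a distinguished triangle `B ⟶g C ⟶h X ⟶i B⟦1⟧` and a
morphism `j : A⟦1⟧ ⟶ X` with `j ≫ i = f⟦1⟧` such that `Z` is a cone of `j`. -/
def IsRightPostnikovConvolution {A B C : 𝒞} (f : A ⟶ B) (g : B ⟶ C) (Z : 𝒞) : Prop :=
  ∃ (X : 𝒞) (h : C ⟶ X) (i : X ⟶ B⟦(1 : ℤ)⟧) (j : A⟦(1 : ℤ)⟧ ⟶ X)
    (p : X ⟶ Z) (q : Z ⟶ A⟦(1 : ℤ)⟧⟦(1 : ℤ)⟧),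
    (Triangle.mk g h i ∈ distTriang 𝒞) ∧ j ≫ i = f⟦(1 : ℤ)⟧' ∧
    Triangle.mk j p q ∈ distTriang 𝒞

/-- `Z` is a convolution of some left Postnikov system associated to the three-term
complex `A ⟶f B ⟶g C`: there are a distinguished triangle `A ⟶f B ⟶k Y ⟶l A⟦1⟧` and a
morphism `m : Y ⟶ C` with `k ≫ m = g` such that `Z` is a cone of `m`. -/
def IsLeftPostnikovConvolution {A B C : 𝒞} (f : A ⟶ B) (g : B ⟶ C) (Z : 𝒞) : Prop :=
  ∃ (Y : 𝒞) (k : B ⟶ Y) (l : Y ⟶ A⟦(1 : ℤ)⟧) (m : Y ⟶ C)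
    (p : C ⟶ Z) (q : Z ⟶ Y⟦(1 : ℤ)⟧),
    (Triangle.mk f k l ∈ distTriang 𝒞) ∧ k ≫ m = g ∧
    Triangle.mk m p q ∈ distTriang 𝒞

/-! Since `Hom(A⟦1⟧, C) = 0`, a morphism `Y ⟶ C` out of a cone `Y` of `f` is determined by its
restriction along `B ⟶ Y`, so the left Postnikov system, and hence the cone of `m`, is unique up
to isomorphism. A right Postnikov system is turned into a left one with the same convolution by
the octahedral axiom applied to `j ≫ i = f⟦1⟧`: it produces `m⟦1⟧ : Y⟦1⟧ ⟶ C⟦1⟧` with cone `Z⟦1⟧`,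
and `m` is recovered because the shift is fully faithful. -/

namespace CategoryTheory.Pretriangulated

lemma Triangle.distinguished_of_neg₁₂ {X₁ X₂ X₃ : 𝒞} (a : X₁ ⟶ X₂) (b : X₂ ⟶ X₃)
    (c : X₃ ⟶ X₁⟦(1 : ℤ)⟧) (h : Triangle.mk (-a) (-b) c ∈ distTriang 𝒞) :
    Triangle.mk a b c ∈ distTriang 𝒞 :=
  let e : X₂ ≅ X₂ := { hom := -𝟙 X₂, inv := -𝟙 X₂ }
  isomorphic_distinguished _ h _ (Triangle.isoMk _ _ (Iso.refl _) e (Iso.refl _)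
    (by simp [e, Triangle.mk]) (by simp [e, Triangle.mk]) (by simp [Triangle.mk]))

lemma Triangle.distinguished_of_neg₂₃ {X₁ X₂ X₃ : 𝒞} (a : X₁ ⟶ X₂) (b : X₂ ⟶ X₃)
    (c : X₃ ⟶ X₁⟦(1 : ℤ)⟧) (h : Triangle.mk a (-b) (-c) ∈ distTriang 𝒞) :
    Triangle.mk a b c ∈ distTriang 𝒞 :=
  let e : X₃ ≅ X₃ := { hom := -𝟙 X₃, inv := -𝟙 X₃ }
  isomorphic_distinguished _ h _ (Triangle.isoMk _ _ (Iso.refl _) (Iso.refl _) e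
    (by simp [Triangle.mk]) (by simp [e, Triangle.mk]) (by simp [e, Triangle.mk]))

lemma Triangle.mk_shift_one_distinguished (T : Triangle 𝒞) (hT : T ∈ distTriang 𝒞) :
    Triangle.mk (T.mor₁⟦(1 : ℤ)⟧') (T.mor₂⟦(1 : ℤ)⟧') (-T.mor₃⟦(1 : ℤ)⟧') ∈ distTriang 𝒞 :=
  Triangle.distinguished_of_neg₁₂ _ _ _
    (rot_of_distTriang _ (rot_of_distTriang _ (rot_of_distTriang _ hT)))

lemma Triangle.mk_mor₃_distinguished (T : Triangle 𝒞) (hT : T ∈ distTriang 𝒞) :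
    Triangle.mk T.mor₃ (T.mor₁⟦(1 : ℤ)⟧') (T.mor₂⟦(1 : ℤ)⟧') ∈ distTriang 𝒞 :=
  Triangle.distinguished_of_neg₂₃ _ _ _ (rot_of_distTriang _ (rot_of_distTriang _ hT))

lemma Triangle.eq_of_mor₂_comp_eq (T : Triangle 𝒞) (hT : T ∈ distTriang 𝒞) {W : 𝒞}
    (hvanish : ∀ w : T.obj₁⟦(1 : ℤ)⟧ ⟶ W, w = 0) {m m' : T.obj₃ ⟶ W}
    (h : T.mor₂ ≫ m = T.mor₂ ≫ m') : m = m' := by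
  obtain ⟨w, hw⟩ := Triangle.yoneda_exact₃ T hT (m - m')
    (by rw [Preadditive.comp_sub, h, sub_self])
  rwa [hvanish w, comp_zero, sub_eq_zero] at hw

lemma exists_distinguished_mk_of_shift_one {Y C Z : 𝒞} (m : Y ⟶ C)
    {u : C⟦(1 : ℤ)⟧ ⟶ Z⟦(1 : ℤ)⟧} {v : Z⟦(1 : ℤ)⟧ ⟶ Y⟦(1 : ℤ)⟧⟦(1 : ℤ)⟧}
    (h : Triangle.mk (m⟦(1 : ℤ)⟧') u v ∈ distTriang 𝒞) :
    ∃ (p : C ⟶ Z) (q : Z ⟶ Y⟦(1 : ℤ)⟧), Triangle.mk m p q ∈ distTriang 𝒞 := by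
  obtain ⟨Z', p, q, hm⟩ := distinguished_cocone_triangle m
  obtain ⟨e, -⟩ := exists_iso_of_arrow_iso _ _ (Triangle.mk_shift_one_distinguished _ hm) h
    (Iso.refl _)
  let e' : Z' ≅ Z := (shiftFunctor 𝒞 (1 : ℤ)).preimageIso (Triangle.π₃.mapIso e)
  exact ⟨p ≫ e'.hom, e'.inv ≫ q, isomorphic_distinguished _ hm _
    (Triangle.isoMk _ _ (Iso.refl _) (Iso.refl _) e'.symm
      (by simp [Triangle.mk]) (by simp [Triangle.mk]) (by simp [Triangle.mk]))⟩

end CategoryTheory.Pretriangulated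

lemma IsLeftPostnikovConvolution.nonempty_iso {A B C : 𝒞} {f : A ⟶ B} {g : B ⟶ C}
    (hvanish : ∀ w : A⟦(1 : ℤ)⟧ ⟶ C, w = 0) {Z₁ Z₂ : 𝒞}
    (h₁ : IsLeftPostnikovConvolution f g Z₁) (h₂ : IsLeftPostnikovConvolution f g Z₂) :
    Nonempty (Z₁ ≅ Z₂) := by
  obtain ⟨Y₁, k₁, l₁, m₁, p₁, q₁, hT₁, hkm₁, hC₁⟩ := h₁
  obtain ⟨Y₂, k₂, l₂, m₂, p₂, q₂, hT₂, hkm₂, hC₂⟩ := h₂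
  obtain ⟨e, -, he₂⟩ := exists_iso_of_arrow_iso _ _ hT₁ hT₂ (Iso.refl _)
  let eY : Y₁ ≅ Y₂ := Triangle.π₃.mapIso e
  have hk : k₁ ≫ eY.hom = k₂ :=
    (by simpa [he₂, Triangle.mk] using e.hom.comm₂ : k₁ ≫ e.hom.hom₃ = k₂)
  have hm : eY.hom ≫ m₂ = m₁ := Triangle.eq_of_mor₂_comp_eq _ hT₁ hvanish
    (show k₁ ≫ eY.hom ≫ m₂ = k₁ ≫ m₁ by rw [reassoc_of% hk, hkm₁, hkm₂])
  obtain ⟨e', -, -⟩ := exists_iso_of_arrow_iso _ _ hC₁ hC₂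
    (Arrow.isoMk eY (Iso.refl C) (by simpa [Triangle.mk] using hm))
  exact ⟨Triangle.π₃.mapIso e'⟩

lemma IsRightPostnikovConvolution.isLeftPostnikovConvolution [IsTriangulated 𝒞] {A B C : 𝒞}
    {f : A ⟶ B} {g : B ⟶ C} {Z : 𝒞} (hZ : IsRightPostnikovConvolution f g Z) :
    IsLeftPostnikovConvolution f g Z := by
  obtain ⟨X, h, i, j, p, q, hT, hji, hC⟩ := hZ
  obtain ⟨Y, k, l, hTf⟩ := distinguished_cocone_triangle f
  -- The octahedron on `j ≫ i = f⟦1⟧` has third triangle `Z ⟶ Y⟦1⟧ ⟶ C⟦1⟧ ⟶ Z⟦1⟧`,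
  -- and `O.comm₃` reads `k⟦1⟧' ≫ O.m₃ = g⟦1⟧'`.
  let O := Triangulated.someOctahedron hji hC (Triangle.mk_mor₃_distinguished _ hT)
    (Triangle.mk_shift_one_distinguished _ hTf)
  let m : Y ⟶ C := (shiftFunctor 𝒞 (1 : ℤ)).preimage O.m₃
  have hm : m⟦(1 : ℤ)⟧' = O.m₃ := Functor.map_preimage _ _
  have hkm : k ≫ m = g :=
    (shiftFunctor 𝒞 (1 : ℤ)).map_injective (by rw [Functor.map_comp, hm]; exact O.comm₃)
  obtain ⟨p', q', hCm⟩ := exists_distinguished_mk_of_shift_one m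
    (hm ▸ rot_of_distTriang _ O.mem)
  exact ⟨Y, k, l, m, p', q', hTf, hkm, hCm⟩

theorem convolutions_iso_of_hom_shift_eq_zero_general [IsTriangulated 𝒞]
    {A B C : 𝒞} (f : A ⟶ B) (g : B ⟶ C)
    (hvanish : ∀ w : A⟦(1 : ℤ)⟧ ⟶ C, w = 0)
    {Z₁ Z₂ : 𝒞}
    (h₁ : IsRightPostnikovConvolution f g Z₁ ∨ IsLeftPostnikovConvolution f g Z₁)
    (h₂ : IsRightPostnikovConvolution f g Z₂ ∨ IsLeftPostnikovConvolution f g Z₂) :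
    Nonempty (Z₁ ≅ Z₂) :=
  IsLeftPostnikovConvolution.nonempty_iso hvanish
    (h₁.elim IsRightPostnikovConvolution.isLeftPostnikovConvolution id)
    (h₂.elim IsRightPostnikovConvolution.isLeftPostnikovConvolution id)

/-- If every morphism `A⟦1⟧ ⟶ C` is zero, then any two convolutions
(of right or left Postnikov systems) of the three-term complex `A ⟶f B ⟶g C` are
isomorphic. -/
theorem convolutions_iso_of_hom_shift_eq_zero [IsTriangulated 𝒞]
    {A B C : 𝒞} (f : A ⟶ B) (g : B ⟶ C) (hfg : f ≫ g = 0)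
    (hvanish : ∀ w : A⟦(1 : ℤ)⟧ ⟶ C, w = 0)
    {Z₁ Z₂ : 𝒞}
    (h₁ : IsRightPostnikovConvolution f g Z₁ ∨ IsLeftPostnikovConvolution f g Z₁)
    (h₂ : IsRightPostnikovConvolution f g Z₂ ∨ IsLeftPostnikovConvolution f g Z₂) :
    Nonempty (Z₁ ≅ Z₂) :=
  convolutions_iso_of_hom_shift_eq_zero_general f g hvanish h₁ h₂
end

section
/- Let f : A ⟶ B and g : B ⟶ C be morphisms of cochain complexes such that f ≫ g is null-homotopic. Let μ : mappingCone f ⟶ C be any morphism in the homotopy category K(𝒜) such that the composite in K(𝒜) of the class of the canonical inclusion B ⟶ mappingCone f with μ equals the class of g. Then there exists a homotopy x : Homotopy (f ≫ g) 0 such that μ equals the class in K(𝒜) of the chain map m(g,x) : mappingCone f ⟶ C whose components in degree n are given by the homotopy x on the summand A^{n+1} and by g^n on the summand B^n. -/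
open CategoryTheory Category Limits CochainComplex CochainComplex.HomComplex

variable {𝒜 : Type*} [Category 𝒜] [Preadditive 𝒜] [HasBinaryBiproducts 𝒜]
variable {A B C : CochainComplex 𝒜 ℤ}

/-- Given chain maps `f : A ⟶ B`, `g : B ⟶ C` and a homotopy `x` from `f ≫ g` to `0`,
this is the chain map `m(g,x) : mappingCone f ⟶ C` which in degree `n` is given by the
homotopy `x` on the summand `A^{n+1}` and by `g^n` on the summand `B^n`
(Mathlib's `mappingCone.desc`-type construction). -/
noncomputable def mappingConeDescOfHomotopy (f : A ⟶ B) (g : B ⟶ C)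
    (x : Homotopy (f ≫ g) 0) : mappingCone f ⟶ C :=
  mappingCone.desc f (Cochain.ofHomotopy x) g (by rw [δ_ofHomotopy]; simp)

/-- Let `f : A ⟶ B`, `g : B ⟶ C` be chain maps with `f ≫ g`
null-homotopic, and let `μ : mappingCone f ⟶ C` be a morphism in the homotopy category
`K(𝒜)` such that the class of the canonical inclusion `inr f : B ⟶ mappingCone f`
composed with `μ` is the class of `g`. Then `μ` is the class of `m(g,x)` for some
homotopy `x` from `f ≫ g` to `0`. -/
theorem homotopyCategory_desc_factorisation
    (f : A ⟶ B) (g : B ⟶ C) (hfg : Nonempty (Homotopy (f ≫ g) 0))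
    (μ : (HomotopyCategory.quotient 𝒜 (ComplexShape.up ℤ)).obj (mappingCone f) ⟶
      (HomotopyCategory.quotient 𝒜 (ComplexShape.up ℤ)).obj C)
    (hμ : (HomotopyCategory.quotient 𝒜 (ComplexShape.up ℤ)).map (mappingCone.inr f) ≫ μ =
      (HomotopyCategory.quotient 𝒜 (ComplexShape.up ℤ)).map g) :
    ∃ x : Homotopy (f ≫ g) 0,
      μ = (HomotopyCategory.quotient 𝒜 (ComplexShape.up ℤ)).map
        (mappingConeDescOfHomotopy f g x) := by
  obtain ⟨φ, hφ⟩ := (HomotopyCategory.quotient 𝒜 (ComplexShape.up ℤ)).map_surjective μ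
  subst hφ
  rw [← Functor.map_comp] at hμ
  obtain H := HomotopyCategory.homotopyOfEq _ _ hμ
  set zH : Cochain B C (-1) := (Cochain.equivHomotopy _ _ H).1 with hzH
  have hzHδ : Cochain.ofHom (mappingCone.inr f ≫ φ) = δ (-1) 0 zH + Cochain.ofHom g :=
    (Cochain.equivHomotopy _ _ H).2
  set α : Cochain A C (-1) :=
    (mappingCone.inl f).comp (Cochain.ofHom φ) (add_zero (-1)) -
      (Cochain.ofHom f).comp zH (zero_add (-1)) with hα
  have hδα : δ (-1) 0 α = Cochain.ofHom (f ≫ g) := by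
    rw [hα, δ_sub, δ_comp_ofHom, mappingCone.δ_inl,
      δ_zero_cochain_comp _ _ _ (show (-1 : ℤ) + 1 = 0 by norm_num),
      show δ (-1) 0 zH = Cochain.ofHom (mappingCone.inr f ≫ φ) - Cochain.ofHom g by
        rw [hzHδ]; abel]
    simp only [δ_ofHom, Cochain.zero_comp, smul_zero, add_zero, Cochain.comp_add]
    ext p
    simp [Cochain.comp_v _ _ (zero_add 0) p p p (by omega) (by omega)]
  refine ⟨(Cochain.equivHomotopy (f ≫ g) 0).symm ⟨α, by simp [hδα]⟩, ?_⟩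
  have hofx : Cochain.ofHomotopy ((Cochain.equivHomotopy (f ≫ g) 0).symm ⟨α, by simp [hδα]⟩)
      = α := congr_arg Subtype.val ((Cochain.equivHomotopy (f ≫ g) 0).apply_symm_apply _)
  have hdesc : mappingConeDescOfHomotopy f g
      ((Cochain.equivHomotopy (f ≫ g) 0).symm ⟨α, by simp [hδα]⟩) =
      mappingCone.desc f α g (by rw [hδα]) := by
    unfold mappingConeDescOfHomotopy
    congr 1
  rw [hdesc]
  refine HomotopyCategory.eq_of_homotopy _ _ (mappingCone.descHomotopy f _ _ 0 zH ?_ ?_)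
  · rw [δ_zero, zero_add, mappingCone.inl_desc, hα]
    abel
  · rw [mappingCone.inr_desc]
    exact hzHδ
end

section
/- Let f : A ⟶ B and g : B ⟶ C be morphisms of cochain complexes such that f ≫ g is null-homotopic. Let θ : A⟦1⟧ ⟶ mappingCone g be any morphism in the homotopy category K(𝒜) such that the composite in K(𝒜) of θ with the class of the canonical projection mappingCone g ⟶ B⟦1⟧ equals the class of f⟦1⟧. Then there exists a homotopy x : Homotopy (f ≫ g) 0 such that θ equals the class in K(𝒜) of the chain map j(f,x) : A⟦1⟧ ⟶ mappingCone g whose components in degree n are given by f^{n+1} into the summand B^{n+1} and by the homotopy x into the summand C^n. -/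
/-!
Write `θ = [φ]` and let `f⁺ : A⟦1⟧ ⇝ B` be the degree `1` cocycle with components `f^{n+1}`.
A homotopy `φ ≫ π ∼ f⟦1⟧`, with `π : mappingCone g ⟶ B⟦1⟧` the projection, unshifts to a
`0`-cochain `μ : A⟦1⟧ ⇝ B` with `δ μ = f⁺ + fst ∘ φ`. Then `β = snd ∘ φ + μ ≫ g` satisfies
`δ β = f⁺ ≫ g`, and shifting `β` back to a `(-1)`-cochain `A ⇝ C` turns this equation into a
homotopy `x : f ≫ g ∼ 0` whose associated cochain is `β`. The components of `φ` and `j(f,x)`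
along `fst` differ by `δ μ` and along `snd` by `μ ≫ g`, so `-μ` is a homotopy between them.
-/

open CategoryTheory Category Limits CochainComplex CochainComplex.HomComplex

variable {𝒜 : Type*} [Category 𝒜] [Preadditive 𝒜] [HasBinaryBiproducts 𝒜]
variable {A B C : CochainComplex 𝒜 ℤ}

/-- The degree `1` cochain `A⟦1⟧ ⇝ B` whose component in degree `n` is `f^{n+1}`. -/
noncomputable def shiftCochainOfHom (f : A ⟶ B) : Cochain (A⟦(1 : ℤ)⟧) B 1 :=
  Cochain.mk (fun p q hpq =>
    (A.shiftFunctorObjXIso 1 p (p + 1) rfl).hom ≫ f.f (p + 1) ≫ (B.XIsoOfEq hpq).hom)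

/-- The degree `1` cochain `A⟦1⟧ ⇝ B` with components `f^{n+1}` is a cocycle. -/
noncomputable def shiftCocycleOfHom (f : A ⟶ B) : Cocycle (A⟦(1 : ℤ)⟧) B 1 :=
  Cocycle.mk (shiftCochainOfHom f) 2 rfl (by
    ext p q hpq
    obtain rfl : q = p + 1 + 1 := by omega
    rw [δ_v 1 2 rfl _ p (p + 1 + 1) hpq (p + 1) (p + 1) (by omega) rfl]
    simp only [shiftCochainOfHom, Cochain.mk_v]
    simp [HomologicalComplex.XIsoOfEq, eqToHom_map,
      Int.negOnePow_even 2 ⟨1, by omega⟩]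
    change A.d (p + 1) (p + 1 + 1) ≫ f.f (p + 1 + 1) +
      (1 : ℤ) • -A.d (p + 1) (p + 1 + 1) ≫ f.f (p + 1 + 1) = (0 : A.X (p + 1) ⟶ B.X (p + 1 + 1))
    simp only [one_smul, Preadditive.neg_comp, add_neg_cancel])

/-- The degree `0` cochain `A⟦1⟧ ⇝ C` whose component in degree `n` is the component
`A^{n+1} ⟶ C^n` of the homotopy `x`. -/
noncomputable def shiftCochainOfHomotopy (f : A ⟶ B) (g : B ⟶ C)
    (x : Homotopy (f ≫ g) 0) : Cochain (A⟦(1 : ℤ)⟧) C 0 :=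
  Cochain.mk (fun p q _ =>
    (A.shiftFunctorObjXIso 1 p (p + 1) rfl).hom ≫ x.hom (p + 1) q)

/-- Given chain maps `f : A ⟶ B`, `g : B ⟶ C` and a homotopy `x` from `f ≫ g` to `0`,
this is the chain map `j(f,x) : A⟦1⟧ ⟶ mappingCone g` which in degree `n` is given by
`f^{n+1}` into the summand `B^{n+1}` and by the homotopy `x` into the summand `C^n`,
with Mathlib's sign conventions for mapping cones
(Mathlib's `mappingCone.lift`-type construction). -/
noncomputable def mappingConeLiftOfHomotopy (f : A ⟶ B) (g : B ⟶ C)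
    (x : Homotopy (f ≫ g) 0) : (A⟦(1 : ℤ)⟧) ⟶ mappingCone g :=
  mappingCone.lift g (-(shiftCocycleOfHom f)) (shiftCochainOfHomotopy f g x) (by
    rw [Cocycle.coe_neg]
    ext p q hpq
    obtain rfl : q = p + 1 := by omega
    have comm := x.comm (p + 1)
    rw [dNext_eq x.hom (show (ComplexShape.up ℤ).Rel (p + 1) (p + 1 + 1) by simp),
      prevD_eq x.hom (show (ComplexShape.up ℤ).Rel p (p + 1) by simp)] at comm
    simp only [HomologicalComplex.comp_f, HomologicalComplex.zero_f_apply, add_zero] at comm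
    rw [Cochain.add_v, δ_v 0 1 rfl _ p (p + 1) hpq p (p + 1) (by omega) rfl]
    simp only [shiftCocycleOfHom, Cocycle.mk_coe, shiftCochainOfHom, shiftCochainOfHomotopy, Cochain.mk_v, Cochain.neg_v,
      Cochain.comp_v _ _ (add_zero 1) p (p + 1) (p + 1) rfl (by omega),
      Cochain.ofHom_v, Cochain.zero_v, HomologicalComplex.XIsoOfEq, eqToIso_refl,
      Iso.refl_hom, comp_id, shiftFunctorObjXIso, Int.negOnePow_one, Units.neg_smul,
      one_smul, assoc]
    simp only [shiftFunctor_obj_d', Int.negOnePow_one, Units.neg_smul, one_smul,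
      Preadditive.neg_comp, Preadditive.comp_neg, neg_neg, id_comp, Category.assoc]
    change (𝟙 (A.X (p + 1)) ≫ x.hom (p + 1) p) ≫ C.d p (p + 1) +
      -(-A.d (p + 1) (p + 1 + 1)) ≫ 𝟙 (A.X (p + 1 + 1)) ≫ x.hom (p + 1 + 1) (p + 1) +
      -(𝟙 (A.X (p + 1)) ≫ f.f (p + 1)) ≫ g.f (p + 1) = (0 : A.X (p + 1) ⟶ C.X (p + 1))
    simp only [id_comp, Preadditive.neg_comp, neg_neg]
    rw [comm]
    abel)

section

variable {𝒜 : Type*} [Category 𝒜] [Preadditive 𝒜] {A B C : CochainComplex 𝒜 ℤ}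
  (f : A ⟶ B) (g : B ⟶ C)

lemma shiftCochainOfHom_eq_neg_leftShift :
    shiftCochainOfHom f = -(Cochain.ofHom f).leftShift 1 1 (zero_add 1) := by
  ext p q hpq
  obtain rfl : q = p + 1 := hpq.symm
  rw [shiftCochainOfHom, Cochain.mk_v, Cochain.neg_v,
    Cochain.leftShift_v _ 1 1 (zero_add 1) p (p + 1) rfl (p + 1) (by omega)]
  norm_num [shiftFunctorObjXIso]

lemma rightUnshift_ofHom_shiftFunctor_map :
    (Cochain.ofHom (f⟦(1 : ℤ)⟧')).rightUnshift 1 (zero_add 1) = shiftCochainOfHom f := by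
  ext p q hpq
  rw [Cochain.rightUnshift_v _ 1 (zero_add 1) p q hpq p (add_zero p), shiftCochainOfHom,
    Cochain.mk_v]
  simp [HomologicalComplex.XIsoOfEq]

lemma shiftCochainOfHomotopy_eq_leftShift (x : Homotopy (f ≫ g) 0) :
    shiftCochainOfHomotopy f g x = (Cochain.ofHomotopy x).leftShift 1 0 (by omega) := by
  ext p
  rw [shiftCochainOfHomotopy, Cochain.mk_v,
    Cochain.leftShift_v _ 1 0 (by omega) p p (add_zero p) (p + 1) (by omega)]
  norm_num [Cochain.ofHomotopy]

lemma δ_rightUnshift_ofHomotopy {K L : CochainComplex 𝒜 ℤ} {ψ₁ ψ₂ : K ⟶ L⟦(1 : ℤ)⟧}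
    (h : Homotopy ψ₁ ψ₂) :
    δ 0 1 ((Cochain.ofHomotopy h).rightUnshift 0 (by omega)) =
      (Cochain.ofHom ψ₂).rightUnshift 1 (zero_add 1) -
        (Cochain.ofHom ψ₁).rightUnshift 1 (zero_add 1) := by
  rw [Cochain.δ_rightUnshift _ 0 (by omega) 1 0 (by omega), δ_ofHomotopy, sub_eq_add_neg,
    Cochain.rightUnshift_add, Cochain.rightUnshift_neg, Int.negOnePow_one, Units.neg_smul,
    one_smul]
  abel

lemma leftUnshift_shiftCochainOfHom_comp :
    ((shiftCochainOfHom f).comp (Cochain.ofHom g) (add_zero 1)).leftUnshift 0 (zero_add 1) =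
      -Cochain.ofHom (f ≫ g) := by
  rw [shiftCochainOfHom_eq_neg_leftShift, Cochain.neg_comp,
    ← Cochain.leftShift_comp_zero_cochain, Cochain.leftUnshift_neg,
    Cochain.leftUnshift_leftShift, Cochain.ofHom_comp]

noncomputable def homotopyOfδEq (β : Cochain (A⟦(1 : ℤ)⟧) C 0)
    (hβ : δ 0 1 β = (shiftCochainOfHom f).comp (Cochain.ofHom g) (add_zero 1)) :
    Homotopy (f ≫ g) 0 :=
  (Cochain.equivHomotopy _ _).symm ⟨β.leftUnshift (-1) (by omega), by
    rw [Cochain.δ_leftUnshift _ _ _ 0 1 (zero_add 1), hβ, leftUnshift_shiftCochainOfHom_comp,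
      Cochain.ofHom_zero, add_zero, Int.negOnePow_one, Units.neg_smul, one_smul, neg_neg]⟩

lemma shiftCochainOfHomotopy_homotopyOfδEq (β : Cochain (A⟦(1 : ℤ)⟧) C 0)
    (hβ : δ 0 1 β = (shiftCochainOfHom f).comp (Cochain.ofHom g) (add_zero 1)) :
    shiftCochainOfHomotopy f g (homotopyOfδEq f g β hβ) = β := by
  have hz : Cochain.ofHomotopy (homotopyOfδEq f g β hβ) = β.leftUnshift (-1) (by omega) :=
    congrArg Subtype.val ((Cochain.equivHomotopy _ _).apply_symm_apply _)
  rw [shiftCochainOfHomotopy_eq_leftShift, hz, Cochain.leftShift_leftUnshift]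

end

section

variable {K : CochainComplex 𝒜 ℤ} (g : B ⟶ C) (φ : K ⟶ mappingCone g)

lemma rightUnshift_ofHom_comp_triangle_mor₃ :
    (Cochain.ofHom (φ ≫ (mappingCone.triangle g).mor₃)).rightUnshift 1 (zero_add 1) =
      -(Cochain.ofHom φ).comp (mappingCone.fst g).1 (zero_add 1) := by
  change (Cochain.ofHom (φ ≫ Cocycle.homOf
    ((-mappingCone.fst g).rightShift 1 0 (zero_add 1)))).rightUnshift 1 _ = _
  rw [Cochain.ofHom_comp, Cocycle.cochain_ofHom_homOf_eq_coe,
    Cochain.rightUnshift_comp _ _ _ 1 (by omega) 1 (by omega),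
    Cocycle.rightShift_coe, Cochain.rightUnshift_rightShift, Cocycle.coe_neg,
    Cochain.comp_neg]

lemma δ_comp_snd_add_comp_ofHom {c : Cochain K B 1} {μ : Cochain K B 0}
    (hμ : δ 0 1 μ = c + (Cochain.ofHom φ).comp (mappingCone.fst g).1 (zero_add 1)) :
    δ 0 1 ((Cochain.ofHom φ).comp (mappingCone.snd g) (zero_add 0) +
        μ.comp (Cochain.ofHom g) (zero_add 0)) = c.comp (Cochain.ofHom g) (add_zero 1) := by
  rw [δ_add, δ_ofHom_comp, mappingCone.δ_snd, δ_comp_ofHom, hμ, Cochain.comp_neg,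
    Cochain.add_comp, ← Cochain.comp_assoc_of_first_is_zero_cochain]
  abel

noncomputable def homotopyLiftOfδEq (c : Cocycle K B 1) (μ : Cochain K B 0)
    (hμ : δ 0 1 μ = c.1 + (Cochain.ofHom φ).comp (mappingCone.fst g).1 (zero_add 1)) :
    Homotopy φ (mappingCone.lift g (-c)
      ((Cochain.ofHom φ).comp (mappingCone.snd g) (zero_add 0) +
        μ.comp (Cochain.ofHom g) (zero_add 0))
      (by rw [δ_comp_snd_add_comp_ofHom g φ hμ, Cocycle.coe_neg, Cochain.neg_comp,
        add_neg_cancel])) :=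
  mappingCone.liftHomotopy g _ _ (-μ) 0
    (by rw [mappingCone.lift_fst, δ_neg, neg_neg, hμ, Cocycle.coe_neg]; abel)
    (by rw [mappingCone.lift_snd, δ_zero, Cochain.neg_comp]; abel)

end

theorem homotopyCategory_lift_factorisation_general
    (f : A ⟶ B) (g : B ⟶ C)
    (θ : (HomotopyCategory.quotient 𝒜 (ComplexShape.up ℤ)).obj (A⟦(1 : ℤ)⟧) ⟶
      (HomotopyCategory.quotient 𝒜 (ComplexShape.up ℤ)).obj (mappingCone g))
    (hθ : θ ≫ (HomotopyCategory.quotient 𝒜 (ComplexShape.up ℤ)).map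
        (mappingCone.triangle g).mor₃ =
      (HomotopyCategory.quotient 𝒜 (ComplexShape.up ℤ)).map (f⟦(1 : ℤ)⟧')) :
    ∃ x : Homotopy (f ≫ g) 0,
      θ = (HomotopyCategory.quotient 𝒜 (ComplexShape.up ℤ)).map
        (mappingConeLiftOfHomotopy f g x) := by
  obtain ⟨φ, rfl⟩ := (HomotopyCategory.quotient 𝒜 (ComplexShape.up ℤ)).map_surjective θ
  have h := HomotopyCategory.homotopyOfEq _ _
    (((HomotopyCategory.quotient 𝒜 (ComplexShape.up ℤ)).map_comp φ _).trans hθ)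
  have hμ : δ 0 1 ((Cochain.ofHomotopy h).rightUnshift 0 (by omega)) = shiftCochainOfHom f +
      (Cochain.ofHom φ).comp (mappingCone.fst g).1 (zero_add 1) := by
    rw [δ_rightUnshift_ofHomotopy h, rightUnshift_ofHom_comp_triangle_mor₃,
      ← rightUnshift_ofHom_shiftFunctor_map]
    exact sub_neg_eq_add _ _
  refine ⟨homotopyOfδEq f g _ (δ_comp_snd_add_comp_ofHom g φ hμ),
    HomotopyCategory.eq_of_homotopy _ _ ((homotopyLiftOfδEq g φ (shiftCocycleOfHom f) _ hμ).trans
      (Homotopy.ofEq ?_))⟩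
  simp only [mappingConeLiftOfHomotopy, shiftCochainOfHomotopy_homotopyOfδEq]

/-- Let `f : A ⟶ B`, `g : B ⟶ C` be chain maps with `f ≫ g`
null-homotopic, and let `θ : A⟦1⟧ ⟶ mappingCone g` be a morphism in the homotopy
category `K(𝒜)` whose composite with the class of the canonical projection
`mappingCone g ⟶ B⟦1⟧` is the class of `f⟦1⟧`. Then `θ` is the class of `j(f,x)` for
some homotopy `x` from `f ≫ g` to `0`. -/
theorem homotopyCategory_lift_factorisation
    (f : A ⟶ B) (g : B ⟶ C) (hfg : Nonempty (Homotopy (f ≫ g) 0))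
    (θ : (HomotopyCategory.quotient 𝒜 (ComplexShape.up ℤ)).obj (A⟦(1 : ℤ)⟧) ⟶
      (HomotopyCategory.quotient 𝒜 (ComplexShape.up ℤ)).obj (mappingCone g))
    (hθ : θ ≫ (HomotopyCategory.quotient 𝒜 (ComplexShape.up ℤ)).map
        (mappingCone.triangle g).mor₃ =
      (HomotopyCategory.quotient 𝒜 (ComplexShape.up ℤ)).map (f⟦(1 : ℤ)⟧')) :
    ∃ x : Homotopy (f ≫ g) 0,
      θ = (HomotopyCategory.quotient 𝒜 (ComplexShape.up ℤ)).map
        (mappingConeLiftOfHomotopy f g x) :=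
  homotopyCategory_lift_factorisation_general f g θ hθ
end
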